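/- arXiv:2311.17321 — 2 statements merged into one kernel-verified Lean document; each statement's English description precedes it below -/
import Mathlib

section
/- For every natural number m ≥ 1, ∑_{i=0}^{m-1} (i+1) · C_i · C_{m-i} = m · C_m. -/
theorem sum_eq_mul_catalan (m : ℕ) (hm : 1 ≤ m) :
    ∑ i ∈ Finset.range m, (i + 1) * catalan i * catalan (m - i) =
    m * catalan m := by
  -- catalan convolution as a range sum
  have hconv : catalan (m + 1) = ∑ i ∈ Finset.range (m + 1), catalan i * catalan (m - i) := by
    rw [catalan_succ, Finset.sum_range]
  -- key recurrence: (m+2) * catalan (m+1) = 2*(2m+1) * catalan m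
  have key : (m + 2) * catalan (m + 1) = 2 * (2 * m + 1) * catalan m := by
    have h := Nat.succ_mul_centralBinom_succ m
    rw [← succ_mul_catalan_eq_centralBinom (m + 1),
        ← succ_mul_catalan_eq_centralBinom m] at h
    have h2 : (m + 1) * ((m + 2) * catalan (m + 1))
        = (m + 1) * (2 * (2 * m + 1) * catalan m) := by
      rw [show (m + 1) * ((m + 2) * catalan (m + 1))
            = (m + 1) * ((m + 1 + 1) * catalan (m + 1)) by ring, h]; ring
    exact Nat.eq_of_mul_eq_mul_left (by omega) h2
  set S := ∑ i ∈ Finset.range (m + 1), (i + 1) * catalan i * catalan (m - i) with hSdef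
  have hrefl : S = ∑ i ∈ Finset.range (m + 1), (m - i + 1) * catalan (m - i) * catalan i := by
    rw [hSdef, ← Finset.sum_range_reflect
      (fun i => (m - i + 1) * catalan (m - i) * catalan i) (m + 1)]
    apply Finset.sum_congr rfl
    intro i hi
    rw [Finset.mem_range] at hi
    have h1 : m + 1 - 1 - i = m - i := by omega
    have h2 : m - (m - i) = i := by omega
    rw [h1, h2]
  have two_s : S + S = (m + 2) * catalan (m + 1) := by
    nth_rewrite 2 [hrefl]
    rw [hSdef, ← Finset.sum_add_distrib, hconv, Finset.mul_sum]
    apply Finset.sum_congr rfl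
    intro i hi
    rw [Finset.mem_range] at hi
    have h3 : m + 2 = (i + 1) + (m - i + 1) := by omega
    rw [h3]; ring
  have hS : (∑ i ∈ Finset.range m, (i + 1) * catalan i * catalan (m - i))
      + (m + 1) * catalan m = S := by
    rw [hSdef, Finset.sum_range_succ]
    simp
  set T := ∑ i ∈ Finset.range m, (i + 1) * catalan i * catalan (m - i)
  have hfin : T + T + ((m + 1) * catalan m + (m + 1) * catalan m)
      = m * catalan m + m * catalan m + ((m + 1) * catalan m + (m + 1) * catalan m) := by
    have : T + T + ((m + 1) * catalan m + (m + 1) * catalan m) = S + S := by omega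
    rw [this, two_s, key]; ring
  omega
end

section
/- For all natural numbers n ≥ 1 and m ≥ 1, n · ∑_{i=0}^{m-1} (i+1) · C_i · C_{n+m-i-1} = m · ∑_{i=0}^{n-1} (i+1) · C_i · C_{n+m-i-1}. -/
lemma cb_succ (k : ℕ) : Nat.centralBinom (k+1) = 2*(2*k+1)*catalan k := by
  apply Nat.eq_of_mul_eq_mul_left (show 0 < k+1 by omega)
  have h := Nat.succ_mul_centralBinom_succ k
  have h2 := succ_mul_catalan_eq_centralBinom k
  calc (k+1) * Nat.centralBinom (k+1) = 2*(2*k+1)*Nat.centralBinom k := h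
    _ = 2*(2*k+1)*((k+1)*catalan k) := by rw [h2]
    _ = (k+1)*(2*(2*k+1)*catalan k) := by ring

lemma cat_succ (k : ℕ) : (k+2) * catalan (k+1) = 2*(2*k+1)*catalan k := by
  rw [show k+2 = (k+1)+1 by rfl, succ_mul_catalan_eq_centralBinom, cb_succ]

lemma key (N : ℕ) : ∀ n, n ≤ N →
    (N+1) * ∑ i ∈ Finset.range n, (i+1)*catalan i*catalan (N-i) =
      n*(n+1)*(2*(N-n)+1)*catalan n*catalan (N-n) := by
  intro n
  induction n with
  | zero => simp
  | succ n ih =>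
    intro hle
    obtain ⟨k, rfl⟩ : ∃ k, N = n+k+1 := ⟨N-n-1, by omega⟩
    have h1 : n+k+1-n = k+1 := by omega
    have h2 : n+k+1-(n+1) = k := by omega
    rw [Finset.sum_range_succ, Nat.mul_add, ih (by omega), h1, h2]
    have e1 := cat_succ k
    have e2 := cat_succ n
    zify at e1 e2 ⊢
    linear_combination ((n:ℤ)+1)*(2*n+1)*(catalan n) * e1 - ((n:ℤ)+1)*(2*k+1)*(catalan k) * e2

theorem count_symmetric (n m : ℕ) (hn : 1 ≤ n) (hm : 1 ≤ m) :
    n * ∑ i ∈ Finset.range m, (i + 1) * catalan i * catalan (n + m - i - 1) =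
    m * ∑ i ∈ Finset.range n, (i + 1) * catalan i * catalan (n + m - i - 1) := by
  obtain ⟨a, rfl⟩ : ∃ a, n = a+1 := ⟨n-1, by omega⟩
  obtain ⟨b, rfl⟩ : ∃ b, m = b+1 := ⟨m-1, by omega⟩
  set N := a+b+1 with hN
  have eS1 : ∑ i ∈ Finset.range (b+1), (i + 1) * catalan i * catalan (a+1 + (b+1) - i - 1)
      = ∑ i ∈ Finset.range (b+1), (i+1)*catalan i*catalan (N-i) :=
    Finset.sum_congr rfl fun i hi => by congr 2; omega
  have eS2 : ∑ i ∈ Finset.range (a+1), (i + 1) * catalan i * catalan (a+1 + (b+1) - i - 1)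
      = ∑ i ∈ Finset.range (a+1), (i+1)*catalan i*catalan (N-i) :=
    Finset.sum_congr rfl fun i hi => by congr 2; omega
  rw [eS1, eS2]
  have K1 := key N (b+1) (by omega)
  have K2 := key N (a+1) (by omega)
  have hNb : N-(b+1) = a := by omega
  have hNa : N-(a+1) = b := by omega
  rw [hNb] at K1
  rw [hNa] at K2
  apply Nat.eq_of_mul_eq_mul_left (show 0 < 2*(N+1) by omega)
  have ca := cat_succ a
  have cb := cat_succ b
  zify at K1 K2 ca cb ⊢
  linear_combination 2*((a:ℤ)+1)*K1 - 2*((b:ℤ)+1)*K2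
    + 2*((a:ℤ)+1)*(b+1)*(2*a+1)*(catalan a)*cb
    - 2*((a:ℤ)+1)*(b+1)*(2*b+1)*(catalan b)*ca
end
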